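/- arXiv:1110.6426 — 5 statements merged into one kernel-verified Lean document; each statement's English description precedes it below -/
import Mathlib

section
/- Let C be an n×n real matrix with nonnegative entries. If there exist vectors p ≥ 0 (componentwise) and η with strictly positive components such that (I − C) p ≥ η componentwise, then the spectral radius of C is strictly less than 1 (and moreover p has strictly positive components). -/
/-!
For an eigenpair `(μ, v)` of `C`, pick `i` maximizing `‖v i‖ / p i`. Since `C ≥ 0`, the triangle
inequality gives `‖μ‖ * p i ≤ (C p) i`, while the hypothesis gives `(C p) i < p i`; hence every
eigenvalue has modulus `< 1`, and so does the maximum over the finite spectrum. Positivity of `p`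
is `p ≥ η + C p > 0`.
-/

open Matrix

/-- The spectral radius of a real square matrix: the maximum of the absolute values of
its complex eigenvalues (elements of the spectrum of the matrix over `ℂ`). -/
noncomputable def specRad {n : ℕ} (C : Matrix (Fin n) (Fin n) ℝ) : ℝ :=
  sSup ((fun z : ℂ => ‖z‖) '' spectrum ℂ (C.map (algebraMap ℝ ℂ)))

namespace Matrix

theorem exists_mulVec_eq_smul_of_mem_spectrum {K ι : Type*} [Field K] [Fintype ι]
    [DecidableEq ι] {A : Matrix ι ι K} {μ : K} (hμ : μ ∈ spectrum K A) :
    ∃ v ≠ 0, A *ᵥ v = μ • v := by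
  rw [← spectrum_toLin', ← Module.End.hasEigenvalue_iff_mem_spectrum] at hμ
  obtain ⟨v, hv⟩ := hμ.exists_hasEigenvector
  exact ⟨v, hv.2, by simpa using hv.apply_eq_smul⟩

variable {ι : Type*} [Fintype ι] {C : Matrix ι ι ℝ}

theorem norm_map_ofReal_mulVec_le (hC : ∀ i j, 0 ≤ C i j) (v : ι → ℂ) (i : ι) :
    ‖(C.map (algebraMap ℝ ℂ) *ᵥ v) i‖ ≤ (C *ᵥ fun j => ‖v j‖) i := by
  simp only [mulVec, dotProduct, map_apply]
  refine (norm_sum_le _ _).trans (Finset.sum_le_sum fun j _ => ?_)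
  rw [norm_mul, Complex.coe_algebraMap, Complex.norm_real, Real.norm_of_nonneg (hC i j)]

theorem mulVec_le_mulVec_of_nonneg (hC : ∀ i j, 0 ≤ C i j) {x y : ι → ℝ} (hxy : x ≤ y) :
    C *ᵥ x ≤ C *ᵥ y := fun i =>
  Finset.sum_le_sum fun j _ => mul_le_mul_of_nonneg_left (hxy j) (hC i j)

theorem exists_norm_mul_le_mulVec_of_mulVec_eq_smul (hC : ∀ i j, 0 ≤ C i j) {p : ι → ℝ}
    (hp : ∀ i, 0 < p i) {μ : ℂ} {v : ι → ℂ} (hv : v ≠ 0)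
    (hμ : C.map (algebraMap ℝ ℂ) *ᵥ v = μ • v) :
    ∃ i, ‖μ‖ * p i ≤ (C *ᵥ p) i := by
  obtain ⟨j, hj⟩ := Function.ne_iff.mp hv
  have : Nonempty ι := ⟨j⟩
  obtain ⟨i, hi⟩ := Finite.exists_max fun j => ‖v j‖ / p j
  set θ := ‖v i‖ / p i
  have hθ : 0 < θ := (div_pos (norm_pos_iff.mpr hj) (hp j)).trans_le (hi j)
  have hvθ : ∀ j, ‖v j‖ ≤ θ * p j := fun j => (div_le_iff₀ (hp j)).mp (hi j)
  refine ⟨i, le_of_mul_le_mul_left ?_ hθ⟩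
  calc θ * (‖μ‖ * p i) = ‖(μ • v) i‖ := by
        rw [Pi.smul_apply, norm_smul, ← div_mul_cancel₀ ‖v i‖ (hp i).ne']; ring
    _ = ‖(C.map (algebraMap ℝ ℂ) *ᵥ v) i‖ := by rw [hμ]
    _ ≤ (C *ᵥ fun j => ‖v j‖) i := norm_map_ofReal_mulVec_le hC v i
    _ ≤ (C *ᵥ (θ • p)) i := mulVec_le_mulVec_of_nonneg hC hvθ i
    _ = θ * (C *ᵥ p) i := by rw [mulVec_smul, Pi.smul_apply, smul_eq_mul]

theorem norm_lt_of_mulVec_lt_smul [DecidableEq ι] (hC : ∀ i j, 0 ≤ C i j) {p : ι → ℝ}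
    (hp : ∀ i, 0 < p i) {r : ℝ} (hCp : ∀ i, (C *ᵥ p) i < r * p i) {μ : ℂ}
    (hμ : μ ∈ spectrum ℂ (C.map (algebraMap ℝ ℂ))) : ‖μ‖ < r := by
  obtain ⟨v, hv, hμv⟩ := exists_mulVec_eq_smul_of_mem_spectrum hμ
  obtain ⟨i, hi⟩ := exists_norm_mul_le_mulVec_of_mulVec_eq_smul hC hp hv hμv
  exact lt_of_mul_lt_mul_right (hi.trans_lt (hCp i)) (hp i).le

end Matrix

theorem specRad_lt_of_forall_norm_lt {n : ℕ} {C : Matrix (Fin n) (Fin n) ℝ} {r : ℝ} (hr : 0 < r)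
    (hC : ∀ μ ∈ spectrum ℂ (C.map (algebraMap ℝ ℂ)), ‖μ‖ < r) : specRad C < r := by
  rcases (spectrum ℂ (C.map (algebraMap ℝ ℂ))).eq_empty_or_nonempty with hempty | hne
  · rwa [specRad, hempty, Set.image_empty, Real.sSup_empty]
  · rw [specRad, ((finite_spectrum _).image _).csSup_lt_iff (hne.image _)]
    rintro _ ⟨μ, hμ, rfl⟩
    exact hC μ hμ

/-- If `C` is a nonnegative matrix and there exist `p ≥ 0` and a strictly
positive vector `η` with `(I - C) p ≥ η` componentwise, then the spectral radius of `C`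
is strictly less than `1`, and moreover `p` is strictly positive componentwise. -/
theorem specRad_lt_one_of_subinvariant
    (n : ℕ) (C : Matrix (Fin n) (Fin n) ℝ) (hC : ∀ i j, 0 ≤ C i j)
    (p η : Fin n → ℝ) (hp : ∀ i, 0 ≤ p i) (hη : ∀ i, 0 < η i)
    (h : ∀ i, η i ≤ ((1 - C) *ᵥ p) i) :
    specRad C < 1 ∧ ∀ i, 0 < p i := by
  have hCp_nonneg : 0 ≤ C *ᵥ p := by
    simpa using mulVec_le_mulVec_of_nonneg hC (show 0 ≤ p from hp)
  have hCp_lt : ∀ i, (C *ᵥ p) i < p i := fun i => by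
    have hi := h i
    rw [sub_mulVec, one_mulVec, Pi.sub_apply] at hi
    linarith [hη i]
  have hp_pos : ∀ i, 0 < p i := fun i => (hCp_nonneg i).trans_lt (hCp_lt i)
  refine ⟨specRad_lt_of_forall_norm_lt one_pos fun μ => ?_, hp_pos⟩
  exact norm_lt_of_mulVec_lt_smul hC hp_pos fun i => by simpa using hCp_lt i
end

section
/- Let C be an n×n real matrix with nonnegative entries and spectral radius ρ(C) < 1, let K be a diagonal matrix with strictly positive diagonal entries, and set A = K(I − C). Then there exists a diagonal matrix D with strictly positive diagonal entries such that the symmetric matrix Aᵀ D + D A is positive definite. -/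
/-!
By Gelfand's formula a nonnegative `C` with `ρ(C) < 1` has a power `C ^ N` whose row sums are
all `< 1`, so `x = (1 + C + ⋯ + C ^ (N - 1)) 𝟙` is a positive vector with
`(1 - C) x = 𝟙 - C ^ N 𝟙 > 0`. Take such vectors `x` for `C` and `y` for `Cᵀ`, and choose the
positive diagonal `D` with `K D x = y`. Then `S = Aᵀ D + D A` is symmetric, has nonpositive
off-diagonal entries, and `S x = (1 - C)ᵀ y + D K (1 - C) x > 0`. Such an `S` is positive
definite: writing `u i = x i * w i`, the off-diagonal bound `w i * w j ≤ (w i ^ 2 + w j ^ 2) / 2`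
gives `uᵀ S u ≥ ∑ i, x i * (S x) i * w i ^ 2`.
-/

open Matrix

open Finset
open scoped ENNReal

theorem spectrum.exists_nnnorm_pow_lt_one {A : Type*} [NormedRing A] [NormedAlgebra ℂ A]
    [CompleteSpace A] {a : A} (ha : spectralRadius ℂ a < 1) :
    ∃ N : ℕ, 0 < N ∧ ‖a ^ N‖₊ < 1 := by
  obtain ⟨N, hN, hpos⟩ :=
    (((spectrum.pow_nnnorm_pow_one_div_tendsto_nhds_spectralRadius a).eventually_lt_const ha).and
      (Filter.eventually_gt_atTop 0)).exists
  refine ⟨N, hpos, ?_⟩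
  by_contra! h
  have : (1 : ℝ≥0∞) ≤ (‖a ^ N‖₊ : ℝ≥0∞) ^ (1 / N : ℝ) :=
    ENNReal.one_le_rpow (by exact_mod_cast h) (by positivity)
  exact hN.not_ge this

namespace Matrix

variable {ι : Type*} [Fintype ι]

theorem spectrum_transpose {R : Type*} [CommRing R] [DecidableEq ι] (A : Matrix ι ι R) :
    spectrum R Aᵀ = spectrum R A := by
  ext z
  simp only [spectrum.mem_iff, algebraMap_eq_diagonal, ← isUnit_transpose (_ - A),
    transpose_sub, diagonal_transpose]

section LinftyOpNorm

attribute [local instance] Matrix.linftyOpNormedAddCommGroup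

theorem sum_apply_lt_one_of_linfty_opNNNorm_map_lt_one {κ : Type*} [Fintype κ]
    {B : Matrix ι κ ℝ} (hB : ∀ i j, 0 ≤ B i j) (h : ‖B.map (algebraMap ℝ ℂ)‖₊ < 1) (i : ι) :
    ∑ j, B i j < 1 := by
  rw [linfty_opNNNorm_def, Finset.sup_lt_iff zero_lt_one] at h
  have hi := NNReal.coe_lt_coe.mpr (h i (mem_univ i))
  push_cast at hi
  simpa [Real.norm_of_nonneg (hB i _)] using hi

end LinftyOpNorm

theorem exists_pos_one_sub_mulVec_pos_of_sum_pow_lt_one [DecidableEq ι] {C : Matrix ι ι ℝ}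
    (hC : ∀ i j, 0 ≤ C i j) {N : ℕ} (hN : 0 < N) (hrow : ∀ i, ∑ j, (C ^ N) i j < 1) :
    ∃ x : ι → ℝ, (∀ i, 0 < x i) ∧ ∀ i, 0 < ((1 - C) *ᵥ x) i := by
  refine ⟨(∑ m ∈ range N, C ^ m) *ᵥ 1, fun i => ?_, fun i => ?_⟩
  · have hterm (m : ℕ) : 0 ≤ ((C ^ m) *ᵥ 1) i :=
      sum_nonneg fun j _ => by simpa using pow_apply_nonneg hC m i j
    rw [sum_mulVec, Finset.sum_apply]
    calc (0 : ℝ) < ((C ^ 0) *ᵥ 1) i := by simp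
      _ ≤ ∑ m ∈ range N, ((C ^ m) *ᵥ 1) i :=
        single_le_sum (fun m _ => hterm m) (mem_range.mpr hN)
  · rw [mulVec_mulVec, mul_neg_geom_sum, sub_mulVec, one_mulVec]
    simpa [mulVec, dotProduct] using hrow i

theorem posDef_of_offDiag_nonpos_of_mulVec_pos {S : Matrix ι ι ℝ} (hS : S.IsSymm)
    (hoff : ∀ i j, i ≠ j → S i j ≤ 0) {z : ι → ℝ} (hz : ∀ i, 0 < z i)
    (hSz : ∀ i, 0 < (S *ᵥ z) i) : S.PosDef := by
  refine .of_dotProduct_mulVec_pos (isHermitian_iff_isSymm.mpr hS) fun u hu => ?_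
  set w : ι → ℝ := fun i => u i / z i
  have hu_eq (i : ι) : u i = z i * w i := (mul_div_cancel₀ _ (hz i).ne').symm
  have hterm (i j : ι) :
      S i j * z i * z j * ((w i ^ 2 + w j ^ 2) / 2) ≤ S i j * u i * u j := by
    rw [hu_eq i, hu_eq j]
    rcases eq_or_ne i j with rfl | hij
    · nlinarith
    · have : S i j * z i * z j ≤ 0 :=
        mul_nonpos_of_nonpos_of_nonneg
          (mul_nonpos_of_nonpos_of_nonneg (hoff i j hij) (hz i).le) (hz j).le
      nlinarith [sq_nonneg (w i - w j)]
  have hsymm : ∑ i, ∑ j, S i j * z i * z j * w j ^ 2 =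
      ∑ i, ∑ j, S i j * z i * z j * w i ^ 2 := by
    rw [sum_comm]
    refine sum_congr rfl fun i _ => sum_congr rfl fun j _ => ?_
    rw [hS.apply i j]
    ring
  obtain ⟨i₀, hi₀⟩ := Function.ne_iff.mp hu
  have hw₀ : w i₀ ≠ 0 := div_ne_zero hi₀ (hz i₀).ne'
  calc 0 < ∑ i, z i * (S *ᵥ z) i * w i ^ 2 :=
        sum_pos' (fun i _ => by have := hz i; have := hSz i; positivity)
          ⟨i₀, mem_univ _, by have := hz i₀; have := hSz i₀; positivity⟩
    _ = ∑ i, ∑ j, S i j * z i * z j * w i ^ 2 := by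
        simp only [mulVec, dotProduct, mul_sum, sum_mul]
        exact sum_congr rfl fun i _ => sum_congr rfl fun j _ => by ring
    _ = ∑ i, ∑ j, S i j * z i * z j * ((w i ^ 2 + w j ^ 2) / 2) := by
        simp only [mul_div_assoc', mul_add, add_div, sum_add_distrib, ← sum_div, hsymm]
        ring
    _ ≤ ∑ i, ∑ j, S i j * u i * u j := sum_le_sum fun i _ => sum_le_sum fun j _ => hterm i j
    _ = star u ⬝ᵥ (S *ᵥ u) := by
        simp only [star_trivial, dotProduct, mulVec, mul_sum]
        exact sum_congr rfl fun i _ => sum_congr rfl fun j _ => by ring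

variable [DecidableEq ι]

theorem isSymm_transpose_mul_diagonal_add_diagonal_mul {R : Type*} [CommSemiring R]
    (A : Matrix ι ι R) (d : ι → R) : (Aᵀ * diagonal d + diagonal d * A).IsSymm := by
  simp only [IsSymm, transpose_add, transpose_mul, transpose_transpose, diagonal_transpose,
    add_comm]

theorem diagonal_mulVec {R : Type*} [NonUnitalNonAssocSemiring R] (d v : ι → R) :
    diagonal d *ᵥ v = d * v :=
  funext (mulVec_diagonal d v)

theorem transpose_mul_diagonal_add_diagonal_mul_mulVec {R : Type*} [CommSemiring R]
    (A : Matrix ι ι R) (d x : ι → R) :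
    (Aᵀ * diagonal d + diagonal d * A) *ᵥ x = Aᵀ *ᵥ (d * x) + d * (A *ᵥ x) := by
  rw [add_mulVec, ← mulVec_mulVec, ← mulVec_mulVec, diagonal_mulVec, diagonal_mulVec]

theorem transpose_mul_diagonal_add_diagonal_mul_apply_nonpos {A : Matrix ι ι ℝ}
    (hA : ∀ i j, i ≠ j → A i j ≤ 0) {d : ι → ℝ} (hd : ∀ i, 0 ≤ d i) {i j : ι} (hij : i ≠ j) :
    (Aᵀ * diagonal d + diagonal d * A) i j ≤ 0 := by
  rw [add_apply, mul_diagonal, diagonal_mul, transpose_apply]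
  exact add_nonpos (mul_nonpos_of_nonpos_of_nonneg (hA j i hij.symm) (hd j))
    (mul_nonpos_of_nonneg_of_nonpos (hd i) (hA i j hij))

end Matrix

theorem spectralRadius_map_le_ofReal_specRad {n : ℕ} (C : Matrix (Fin n) (Fin n) ℝ) :
    spectralRadius ℂ (C.map (algebraMap ℝ ℂ)) ≤ ENNReal.ofReal (specRad C) := by
  have hbdd : BddAbove ((fun z : ℂ => ‖z‖) '' spectrum ℂ (C.map (algebraMap ℝ ℂ))) :=
    ((Matrix.finite_spectrum _).image _).bddAbove
  refine iSup₂_le fun z hz => ?_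
  rw [← enorm_eq_nnnorm, ← ofReal_norm]
  exact ENNReal.ofReal_le_ofReal (le_csSup hbdd ⟨z, hz, rfl⟩)

theorem specRad_transpose {n : ℕ} (C : Matrix (Fin n) (Fin n) ℝ) : specRad Cᵀ = specRad C := by
  rw [specRad, specRad, transpose_map, spectrum_transpose]

section LinftyOpNorm

attribute [local instance] Matrix.linftyOpNormedRing Matrix.linftyOpNormedAlgebra

theorem exists_sum_pow_lt_one_of_specRad_lt_one {n : ℕ} {C : Matrix (Fin n) (Fin n) ℝ}
    (hC : ∀ i j, 0 ≤ C i j) (hρ : specRad C < 1) :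
    ∃ N : ℕ, 0 < N ∧ ∀ i, ∑ j, (C ^ N) i j < 1 := by
  obtain ⟨N, hN, hnorm⟩ := spectrum.exists_nnnorm_pow_lt_one <|
    (spectralRadius_map_le_ofReal_specRad C).trans_lt (ENNReal.ofReal_lt_one.mpr hρ)
  rw [← Matrix.map_pow] at hnorm
  exact ⟨N, hN, sum_apply_lt_one_of_linfty_opNNNorm_map_lt_one (pow_apply_nonneg hC N) hnorm⟩

end LinftyOpNorm

theorem exists_pos_one_sub_mulVec_pos_of_specRad_lt_one {n : ℕ} {C : Matrix (Fin n) (Fin n) ℝ}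
    (hC : ∀ i j, 0 ≤ C i j) (hρ : specRad C < 1) :
    ∃ x : Fin n → ℝ, (∀ i, 0 < x i) ∧ ∀ i, 0 < ((1 - C) *ᵥ x) i :=
  let ⟨_, hN, hrow⟩ := exists_sum_pow_lt_one_of_specRad_lt_one hC hρ
  exists_pos_one_sub_mulVec_pos_of_sum_pow_lt_one hC hN hrow

/-- If `C` is nonnegative with spectral radius `< 1` and `K = diagonal k`
has strictly positive diagonal entries, then for `A = K (I - C)` there exists a positive
diagonal matrix `D = diagonal d` such that `Aᵀ D + D A` is positive definite. -/
theorem exists_posDiag_lyapunov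
    (n : ℕ) (C : Matrix (Fin n) (Fin n) ℝ) (hC : ∀ i j, 0 ≤ C i j)
    (hρ : specRad C < 1)
    (k : Fin n → ℝ) (hk : ∀ i, 0 < k i) :
    ∃ d : Fin n → ℝ, (∀ i, 0 < d i) ∧
      ((Matrix.diagonal k * (1 - C))ᵀ * Matrix.diagonal d +
        Matrix.diagonal d * (Matrix.diagonal k * (1 - C))).PosDef := by
  obtain ⟨x, hx, hCx⟩ := exists_pos_one_sub_mulVec_pos_of_specRad_lt_one hC hρ
  obtain ⟨y, hy, hCy⟩ := exists_pos_one_sub_mulVec_pos_of_specRad_lt_one (C := Cᵀ)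
    (fun i j => hC j i) (by rwa [specRad_transpose])
  set d : Fin n → ℝ := fun i => y i / (k i * x i)
  have hd (i : Fin n) : 0 < d i := div_pos (hy i) (mul_pos (hk i) (hx i))
  have hA_offDiag (i j : Fin n) (hij : i ≠ j) : (diagonal k * (1 - C)) i j ≤ 0 := by
    simpa [one_apply_ne hij] using mul_nonneg (hk i).le (hC i j)
  have hKDx : k * (d * x) = y := funext fun i => by
    simp only [Pi.mul_apply, d]
    field_simp [(hk i).ne', (hx i).ne']
  refine ⟨d, hd, posDef_of_offDiag_nonpos_of_mulVec_pos
    (isSymm_transpose_mul_diagonal_add_diagonal_mul _ d)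
    (fun i j hij => transpose_mul_diagonal_add_diagonal_mul_apply_nonpos hA_offDiag
      (fun i => (hd i).le) hij) hx fun i => ?_⟩
  rw [transpose_mul_diagonal_add_diagonal_mul_mulVec, transpose_mul, diagonal_transpose,
    ← mulVec_mulVec, ← mulVec_mulVec, diagonal_mulVec, hKDx, diagonal_mulVec, transpose_sub,
    transpose_one]
  exact add_pos (hCy i) (mul_pos (hd i) (mul_pos (hk i) (hCx i)))
end

section
/- Let C be an n×n real matrix with nonnegative entries and spectral radius ρ(C) < 1, and let K be a diagonal matrix with strictly positive diagonal entries. Then every complex eigenvalue of the matrix A = K(I − C) has strictly positive real part; equivalently, −K(I − C) is a Hurwitz (stable) matrix. -/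
/-!
Suppose `μ` is an eigenvalue of `diagonal k * (1 - C)` with eigenvector `x` and `μ.re ≤ 0`.
Coordinatewise `(kᵢ - μ) xᵢ = kᵢ (C x)ᵢ`, and `‖kᵢ - μ‖ ≥ kᵢ`, so `v = |x|` is a nonzero
nonnegative vector with `v ≤ C v`. Since `C ≥ 0` this iterates to `v ≤ Cᵐ v`, so every power of
`C` has ℓ∞-operator norm at least `1`, and Gelfand's formula forces `ρ(C) ≥ 1`.
-/

open Matrix

lemma spectrum.le_spectralRadius_of_pow_le_nnnorm_pow {A : Type*} [NormedRing A]
    [NormedAlgebra ℂ A] [CompleteSpace A] {a : A} {r : NNReal}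
    (h : ∀ m, r ^ m ≤ ‖a ^ m‖₊) : (r : ENNReal) ≤ spectralRadius ℂ a := by
  refine ge_of_tendsto (spectrum.pow_nnnorm_pow_one_div_tendsto_nhds_spectralRadius a) ?_
  filter_upwards [Filter.eventually_ne_atTop 0] with m hm
  calc (r : ENNReal) = ((r : ENNReal) ^ m) ^ (1 / m : ℝ) := by
        rw [one_div, ENNReal.pow_rpow_inv_natCast hm]
    _ ≤ (‖a ^ m‖₊ : ENNReal) ^ (1 / m : ℝ) := by
        gcongr
        exact_mod_cast h m

lemma Complex.le_norm_ofReal_sub_of_re_nonpos (r : ℝ) {μ : ℂ} (hμ : μ.re ≤ 0) :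
    r ≤ ‖(r : ℂ) - μ‖ :=
  calc r ≤ ((r : ℂ) - μ).re := by simp [hμ]
    _ ≤ ‖(r : ℂ) - μ‖ := Complex.re_le_norm _

namespace Matrix

variable {ι : Type*} [Fintype ι]

lemma mulVec_mono_of_nonneg {R : Type*} [Semiring R] [PartialOrder R] [IsOrderedRing R]
    {C : Matrix ι ι R} (hC : ∀ i j, 0 ≤ C i j) {v w : ι → R} (hvw : v ≤ w) :
    C *ᵥ v ≤ C *ᵥ w := fun i =>
  Finset.sum_le_sum fun j _ => mul_le_mul_of_nonneg_left (hvw j) (hC i j)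

lemma le_pow_mulVec_of_le_mulVec {R : Type*} [Semiring R] [PartialOrder R] [IsOrderedRing R]
    [DecidableEq ι] {C : Matrix ι ι R} (hC : ∀ i j, 0 ≤ C i j) {v : ι → R} (hv : v ≤ C *ᵥ v)
    (m : ℕ) : v ≤ (C ^ m) *ᵥ v := by
  induction m with
  | zero => simp
  | succ m ih =>
    calc v ≤ (C ^ m) *ᵥ v := ih
      _ ≤ (C ^ m) *ᵥ (C *ᵥ v) := mulVec_mono_of_nonneg (pow_apply_nonneg hC m) hv
      _ = (C ^ (m + 1)) *ᵥ v := by rw [mulVec_mulVec, pow_succ]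

lemma norm_mulVec_map_ofReal_apply_le {C : Matrix ι ι ℝ} (hC : ∀ i j, 0 ≤ C i j)
    (x : ι → ℂ) (i : ι) : ‖(C.map (algebraMap ℝ ℂ) *ᵥ x) i‖ ≤ (C *ᵥ fun j => ‖x j‖) i :=
  calc ‖(C.map (algebraMap ℝ ℂ) *ᵥ x) i‖ ≤ ∑ j, ‖(C i j : ℂ) * x j‖ := norm_sum_le _ _
    _ = (C *ᵥ fun j => ‖x j‖) i := by
        simp [mulVec, dotProduct, Complex.norm_real, abs_of_nonneg (hC i _)]

lemma exists_le_mulVec_of_mem_spectrum_diagonal_mul_one_sub [DecidableEq ι]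
    {C : Matrix ι ι ℝ} (hC : ∀ i j, 0 ≤ C i j) {k : ι → ℝ} (hk : ∀ i, 0 < k i) {μ : ℂ}
    (hμ : μ ∈ spectrum ℂ ((diagonal k * (1 - C)).map (algebraMap ℝ ℂ))) (hre : μ.re ≤ 0) :
    ∃ v : ι → ℝ, 0 ≤ v ∧ v ≠ 0 ∧ v ≤ C *ᵥ v := by
  obtain ⟨x, hx, hx₀⟩ :
      ∃ x, (diagonal k * (1 - C)).map (algebraMap ℝ ℂ) *ᵥ x = μ • x ∧ x ≠ 0 := by
    rw [← spectrum_toLin', ← Module.End.hasEigenvalue_iff_mem_spectrum] at hμ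
    simpa [Module.End.hasEigenvector_iff] using hμ.exists_hasEigenvector
  refine ⟨fun i => ‖x i‖, fun i => norm_nonneg _, ?_, fun i => ?_⟩
  · simpa [funext_iff] using hx₀
  have hcoord : ((k i : ℂ) - μ) * x i = k i * (C.map (algebraMap ℝ ℂ) *ᵥ x) i := by
    have := congrFun hx i
    rw [← RingHom.mapMatrix_apply, map_mul, map_sub, map_one, RingHom.mapMatrix_apply,
      RingHom.mapMatrix_apply, diagonal_map (map_zero _), ← mulVec_mulVec, mulVec_diagonal,
      sub_mulVec, one_mulVec] at this
    simp only [Pi.sub_apply, Pi.smul_apply, smul_eq_mul] at this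
    linear_combination this
  have hscaled : k i * ‖x i‖ ≤ k i * (C *ᵥ fun j => ‖x j‖) i :=
    calc k i * ‖x i‖ ≤ ‖(k i : ℂ) - μ‖ * ‖x i‖ := by
          gcongr
          exact Complex.le_norm_ofReal_sub_of_re_nonpos _ hre
      _ = k i * ‖(C.map (algebraMap ℝ ℂ) *ᵥ x) i‖ := by
          rw [← norm_mul, hcoord, norm_mul, Complex.norm_real, Real.norm_of_nonneg (hk i).le]
      _ ≤ k i * (C *ᵥ fun j => ‖x j‖) i :=
          mul_le_mul_of_nonneg_left (norm_mulVec_map_ofReal_apply_le hC x i) (hk i).le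
  exact le_of_mul_le_mul_left hscaled (hk i)

section LinftyOpNorm

attribute [local instance] Matrix.linftyOpNormedAddCommGroup Matrix.linftyOpNormedRing
  Matrix.linftyOpNormedAlgebra

lemma linfty_opNNNorm_map_ofReal {m n : Type*} [Fintype m] [Fintype n] (C : Matrix m n ℝ) :
    ‖C.map (algebraMap ℝ ℂ)‖₊ = ‖C‖₊ := by
  simp [linfty_opNNNorm_def]

lemma one_le_linfty_opNNNorm_pow_of_le_mulVec [DecidableEq ι] {C : Matrix ι ι ℝ}
    (hC : ∀ i j, 0 ≤ C i j) {v : ι → ℝ} (hv₀ : 0 ≤ v) (hv : v ≠ 0) (hCv : v ≤ C *ᵥ v) (m : ℕ) :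
    1 ≤ ‖C ^ m‖₊ := by
  have hvCv : ‖v‖₊ ≤ ‖(C ^ m) *ᵥ v‖₊ := by
    have hle := le_pow_mulVec_of_le_mulVec hC hCv m
    refine pi_nnnorm_le_iff.2 fun i => (?_ : ‖v i‖₊ ≤ _).trans (nnnorm_le_pi_nnnorm _ i)
    refine norm_le_norm_of_abs_le_abs ?_
    rw [abs_of_nonneg (hv₀ i), abs_of_nonneg ((hv₀ i).trans (hle i))]
    exact hle i
  exact (le_mul_iff_one_le_left (nnnorm_pos.2 hv)).1 (hvCv.trans (linfty_opNNNorm_mulVec _ _))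

lemma spectralRadius_map_ofReal_le_specRad {n : ℕ} (C : Matrix (Fin n) (Fin n) ℝ) :
    spectralRadius ℂ (C.map (algebraMap ℝ ℂ)) ≤ ENNReal.ofReal (specRad C) := by
  have hbdd :=
    ((spectrum.isCompact (𝕜 := ℂ) (C.map (algebraMap ℝ ℂ))).image continuous_norm).bddAbove
  refine iSup₂_le fun z hz => ?_
  rw [← ENNReal.ofReal_coe_nnreal, coe_nnnorm]
  exact ENNReal.ofReal_le_ofReal (le_csSup hbdd ⟨z, hz, rfl⟩)

lemma one_le_specRad_of_le_mulVec {n : ℕ} {C : Matrix (Fin n) (Fin n) ℝ}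
    (hC : ∀ i j, 0 ≤ C i j) {v : Fin n → ℝ} (hv₀ : 0 ≤ v) (hv : v ≠ 0) (hCv : v ≤ C *ᵥ v) :
    1 ≤ specRad C := by
  have hpow (m : ℕ) : (1 : NNReal) ^ m ≤ ‖C.map (algebraMap ℝ ℂ) ^ m‖₊ := by
    rw [one_pow, ← RingHom.mapMatrix_apply, ← map_pow, RingHom.mapMatrix_apply,
      linfty_opNNNorm_map_ofReal]
    exact one_le_linfty_opNNNorm_pow_of_le_mulVec hC hv₀ hv hCv m
  have := (spectrum.le_spectralRadius_of_pow_le_nnnorm_pow hpow).trans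
    (spectralRadius_map_ofReal_le_specRad C)
  exact ENNReal.one_le_ofReal.1 (by exact_mod_cast this)

end LinftyOpNorm

end Matrix

/-- If `C` is nonnegative with spectral radius `< 1` and `K = diagonal k`
has strictly positive diagonal entries, then every complex eigenvalue of
`A = K (I - C)` has strictly positive real part; equivalently, `-K (I - C)` is a
Hurwitz (stable) matrix: all its complex eigenvalues have strictly negative real part. -/
theorem eigenvalues_pos_re_of_D_stability
    (n : ℕ) (C : Matrix (Fin n) (Fin n) ℝ) (hC : ∀ i j, 0 ≤ C i j)
    (hρ : specRad C < 1)
    (k : Fin n → ℝ) (hk : ∀ i, 0 < k i) :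
    (∀ μ ∈ spectrum ℂ ((Matrix.diagonal k * (1 - C)).map (algebraMap ℝ ℂ)), 0 < μ.re) ∧
    (∀ μ ∈ spectrum ℂ ((-(Matrix.diagonal k * (1 - C))).map (algebraMap ℝ ℂ)), μ.re < 0) := by
  have hpos : ∀ μ ∈ spectrum ℂ ((diagonal k * (1 - C)).map (algebraMap ℝ ℂ)), 0 < μ.re := by
    intro μ hμ
    by_contra! hre
    obtain ⟨v, hv₀, hv, hCv⟩ := exists_le_mulVec_of_mem_spectrum_diagonal_mul_one_sub hC hk hμ hre
    exact (one_le_specRad_of_le_mulVec hC hv₀ hv hCv).not_gt hρ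
  refine ⟨hpos, fun μ hμ => ?_⟩
  rw [Matrix.map_neg _ (map_neg _), ← spectrum.neg_eq] at hμ
  simpa using hpos (-μ) hμ
end

section
/- Let A be an n×n real matrix and suppose there exists a diagonal matrix D with strictly positive diagonal entries such that Aᵀ D + D A is positive definite. Then every differentiable function e : ℝ → ℝⁿ satisfying e'(t) = −A e(t) for all t ≥ 0 converges to 0 as t → ∞. -/
/-!
With `P = diagonal d`, the Lyapunov function `V x = xᵀ P x` satisfies
`d/dt V (e t) = -(e t)ᵀ (Aᵀ P + P A) (e t)` along solutions. Two continuous functions that are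
homogeneous of degree two, the second positive away from `0`, are comparable: compare them on the
compact unit sphere. Hence `V' ≤ -c V` for some `c > 0`, Grönwall gives
`V (e t) ≤ V (e 0) * exp (-c t)`, and since `P` is positive definite, `V (e t) → 0` forces `e t → 0`.
-/

open Matrix Filter Topology Real Metric

section DerivDotProduct

variable {𝕜 ι : Type*} [NontriviallyNormedField 𝕜] [Fintype ι] {f g : 𝕜 → ι → 𝕜} {f' g' : ι → 𝕜}
  {t : 𝕜}

theorem HasDerivAt.dotProduct (hf : HasDerivAt f f' t) (hg : HasDerivAt g g' t) :
    HasDerivAt (fun s => f s ⬝ᵥ g s) (f' ⬝ᵥ g t + f t ⬝ᵥ g') t := by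
  show HasDerivAt (fun s => ∑ i, f s i * g s i) (∑ i, f' i * g t i + ∑ i, f t i * g' i) t
  rw [← Finset.sum_add_distrib]
  exact HasDerivAt.fun_sum fun i _ => (hasDerivAt_pi.mp hf i).mul (hasDerivAt_pi.mp hg i)

theorem HasDerivAt.matrix_mulVec (P : Matrix ι ι 𝕜) (hf : HasDerivAt f f' t) :
    HasDerivAt (fun s => P *ᵥ f s) (P *ᵥ f') t :=
  hasDerivAt_pi.mpr fun i => by
    have h := (hasDerivAt_const t fun j => P i j).dotProduct hf
    rwa [zero_dotProduct, zero_add] at h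

end DerivDotProduct

theorem exists_pos_le_mul_of_sq_homogeneous {E : Type*} [NormedAddCommGroup E]
    [NormedSpace ℝ E] [FiniteDimensional ℝ E] {Q R : E → ℝ} (hQc : Continuous Q)
    (hRc : Continuous R) (hQ : ∀ (s : ℝ) x, Q (s • x) = s ^ 2 * Q x)
    (hR : ∀ (s : ℝ) x, R (s • x) = s ^ 2 * R x) (hpos : ∀ x, x ≠ 0 → 0 < Q x) :
    ∃ C > 0, ∀ x, R x ≤ C * Q x := by
  have hQS : ∀ u ∈ sphere (0 : E) 1, 0 < Q u := fun u hu =>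
    hpos u (ne_zero_of_mem_unit_sphere ⟨u, hu⟩)
  obtain ⟨B, hB⟩ := (isCompact_sphere (0 : E) 1).bddAbove_image
    (hRc.continuousOn.div hQc.continuousOn fun u hu => (hQS u hu).ne')
  refine ⟨max B 1, by positivity, fun x => ?_⟩
  rcases eq_or_ne x 0 with rfl | hx
  · have hR0 : R 0 = 0 := by simpa using hR 0 0
    have hQ0 : Q 0 = 0 := by simpa using hQ 0 0
    rw [hR0, hQ0, mul_zero]
  set u := ‖x‖⁻¹ • x
  have hu : u ∈ sphere (0 : E) 1 := by simp [u, norm_smul, hx]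
  have hxu : x = ‖x‖ • u := by simp [u, smul_smul, hx]
  have hRu : R u ≤ max B 1 * Q u := by
    rw [← div_le_iff₀ (hQS u hu)]
    exact (hB (Set.mem_image_of_mem _ hu)).trans (le_max_left B 1)
  rw [hxu, hR, hQ, mul_left_comm]
  gcongr

theorem le_mul_exp_of_hasDerivAt_le_neg_mul {W W' : ℝ → ℝ} {k : ℝ}
    (hW : ∀ t, 0 ≤ t → HasDerivAt W (W' t) t) (hle : ∀ t, 0 ≤ t → W' t ≤ -k * W t)
    {t : ℝ} (ht : 0 ≤ t) : W t ≤ W 0 * exp (-k * t) := by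
  have := le_gronwallBound_of_liminf_deriv_right_le (f' := W') (K := -k) (ε := 0)
    (fun s hs => (hW s hs.1).continuousAt.continuousWithinAt)
    (fun s hs _ hr => (hW s hs.1).hasDerivWithinAt.liminf_right_slope_le hr) le_rfl
    (fun s hs => by rw [add_zero]; exact hle s hs.1) t ⟨ht, le_rfl⟩
  simpa [gronwallBound_ε0] using this

theorem tendsto_zero_of_hasDerivAt_le_neg_mul {W W' : ℝ → ℝ} {k : ℝ} (hk : 0 < k)
    (hW0 : ∀ t, 0 ≤ W t) (hW : ∀ t, 0 ≤ t → HasDerivAt W (W' t) t)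
    (hle : ∀ t, 0 ≤ t → W' t ≤ -k * W t) : Tendsto W atTop (𝓝 0) := by
  have hexp : Tendsto (fun t => W 0 * exp (-k * t)) atTop (𝓝 0) := by
    simpa [neg_mul] using
      (tendsto_exp_neg_atTop_nhds_zero.comp (tendsto_id.const_mul_atTop hk)).const_mul (W 0)
  exact tendsto_of_tendsto_of_tendsto_of_le_of_le' tendsto_const_nhds hexp
    (.of_forall hW0) ((eventually_ge_atTop 0).mono fun t ht =>
      le_mul_exp_of_hasDerivAt_le_neg_mul hW hle ht)

namespace Matrix

variable {n : Type*} [Fintype n]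

theorem smul_dotProduct_mulVec_smul (P : Matrix n n ℝ) (s : ℝ) (x : n → ℝ) :
    (s • x) ⬝ᵥ P *ᵥ (s • x) = s ^ 2 * (x ⬝ᵥ P *ᵥ x) := by
  rw [smul_dotProduct, mulVec_smul, dotProduct_smul, smul_eq_mul, smul_eq_mul, ← mul_assoc, sq]

theorem neg_mulVec_dotProduct_add_dotProduct_neg_mulVec (A P : Matrix n n ℝ) (x : n → ℝ) :
    -(A *ᵥ x) ⬝ᵥ P *ᵥ x + x ⬝ᵥ P *ᵥ -(A *ᵥ x) = -(x ⬝ᵥ (Aᵀ * P + P * A) *ᵥ x) := by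
  rw [add_mulVec, ← mulVec_mulVec, ← mulVec_mulVec, dotProduct_add, neg_dotProduct, mulVec_neg,
    dotProduct_neg, dotProduct_mulVec x Aᵀ, vecMul_transpose, dotProduct_comm (A *ᵥ x)]
  ring

namespace PosDef

variable {P : Matrix n n ℝ}

theorem exists_pos_le_mul (hP : P.PosDef) {R : (n → ℝ) → ℝ} (hRc : Continuous R)
    (hR : ∀ (s : ℝ) x, R (s • x) = s ^ 2 * R x) : ∃ C > 0, ∀ x, R x ≤ C * (x ⬝ᵥ P *ᵥ x) :=
  exists_pos_le_mul_of_sq_homogeneous (by fun_prop) hRc (smul_dotProduct_mulVec_smul P) hR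
    fun x hx => by simpa using hP.dotProduct_mulVec_pos hx

theorem tendsto_zero_of_tendsto_dotProduct_mulVec (hP : P.PosDef) {α : Type*} {l : Filter α}
    {f : α → n → ℝ} (h : Tendsto (fun a => f a ⬝ᵥ P *ᵥ f a) l (𝓝 0)) : Tendsto f l (𝓝 0) := by
  obtain ⟨C, -, hC⟩ := hP.exists_pos_le_mul (R := fun x => ‖x‖ ^ 2) (by fun_prop)
    fun s x => by rw [norm_smul, mul_pow, Real.norm_eq_abs, sq_abs]
  have hsq : Tendsto (fun a => ‖f a‖ ^ 2) l (𝓝 0) :=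
    squeeze_zero (fun a => by positivity) (fun a => hC (f a)) (by simpa using h.const_mul C)
  rw [tendsto_zero_iff_norm_tendsto_zero]
  simpa using hsq.sqrt

end PosDef

end Matrix

/-- If there is a diagonal matrix `D = diagonal d` with strictly positive
diagonal entries such that `Aᵀ D + D A` is positive definite, then every differentiable
function `e : ℝ → ℝⁿ` satisfying `e'(t) = -A e(t)` for all `t ≥ 0` converges to `0` as
`t → ∞`. -/
theorem tendsto_zero_of_diagonal_lyapunov
    (n : ℕ) (A : Matrix (Fin n) (Fin n) ℝ)
    (d : Fin n → ℝ) (hd : ∀ i, 0 < d i)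
    (hpd : (Aᵀ * Matrix.diagonal d + Matrix.diagonal d * A).PosDef)
    (e : ℝ → Fin n → ℝ) (hdiff : Differentiable ℝ e)
    (he : ∀ t : ℝ, 0 ≤ t → deriv e t = -(A *ᵥ e t)) :
    Filter.Tendsto e Filter.atTop (nhds 0) := by
  set P := diagonal d
  have hP : P.PosDef := posDef_diagonal_iff.mpr hd
  obtain ⟨C, hC, hPM⟩ := hpd.exists_pos_le_mul (R := fun x => x ⬝ᵥ P *ᵥ x) (by fun_prop)
    (smul_dotProduct_mulVec_smul P)
  have hderiv : ∀ t, 0 ≤ t → HasDerivAt (fun s => e s ⬝ᵥ P *ᵥ e s)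
      (-(e t ⬝ᵥ (Aᵀ * P + P * A) *ᵥ e t)) t := fun t ht => by
    have he' : HasDerivAt e (-(A *ᵥ e t)) t := he t ht ▸ (hdiff t).hasDerivAt
    rw [← neg_mulVec_dotProduct_add_dotProduct_neg_mulVec]
    exact he'.dotProduct (he'.matrix_mulVec P)
  refine hP.tendsto_zero_of_tendsto_dotProduct_mulVec <|
    tendsto_zero_of_hasDerivAt_le_neg_mul (inv_pos.mpr hC)
      (fun t => by simpa using hP.posSemidef.dotProduct_mulVec_nonneg (e t)) hderiv fun t _ => ?_
  rw [neg_mul, neg_le_neg_iff, inv_mul_le_iff₀ hC]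
  exact hPM (e t)
end

section
/- (Stability of the Foschini–Miljanic algorithm.) Let n ≥ 1, let g_{ji} > 0, ν_i > 0, γ_i > 0, define the n×n matrix C by C_{ii} = 0 and C_{ij} = γ_i g_{ji}/g_{ii} for i ≠ j, and the vector η by η_i = γ_i ν_i/g_{ii}. Assume the spectral radius of C is strictly less than 1, and let k_i > 0 be arbitrary proportionality constants with K = diag(k_i). Then every differentiable function p : ℝ → ℝⁿ satisfying the Foschini–Miljanic dynamics p_i'(t) = k_i ( −p_i(t) + γ_i ( ∑_{j≠i} (g_{ji}/g_{ii}) p_j(t) + ν_i/g_{ii} ) ) for all t ≥ 0, with any initial state p(0), converges as t → ∞ to the unique equilibrium p* = (I − C)^{-1} η. -/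
/-!
Since `C ≥ 0` and `ρ(C) < 1`, Gelfand's formula gives a power `C ^ m` whose row sums are `< 1`,
and then `v = ∑_{j<m} C ^ j 𝟙` is a positive vector with `C v ≤ β v` for some `β < 1`.
In the weighted sup norm `‖x‖_v = maxᵢ |xᵢ| / vᵢ` an explicit Euler step
`x ↦ x + δ K (C - 1) x` contracts by the factor `1 - c δ`, where `c = minᵢ kᵢ (1 - β)`.
So the upper right Dini derivative of `‖p t - p*‖_v` is at most `-c ‖p t - p*‖_v`, and
Grönwall's inequality gives exponential convergence of `p t` to `p* = (1 - C)⁻¹ η`.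
-/

open Matrix Finset

open Filter Topology

lemma exists_pos_forall_le {ι : Type*} [Finite ι] {a : ι → ℝ} (ha : ∀ i, 0 < a i) :
    ∃ c > 0, ∀ i, c ≤ a i :=
  (eventually_all.2 fun i => eventually_le_nhds (ha i)).exists_gt

section Nonneg

variable {ι R : Type*} [Semiring R] [PartialOrder R] [IsOrderedRing R]

lemma mulVec_nonneg {κ : Type*} [Fintype κ] {A : Matrix ι κ R} {x : κ → R}
    (hA : ∀ i j, 0 ≤ A i j) (hx : ∀ j, 0 ≤ x j) (i : ι) : 0 ≤ (A *ᵥ x) i :=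
  Finset.sum_nonneg fun j _ => mul_nonneg (hA i j) (hx j)

lemma pow_mulVec_nonneg [Fintype ι] [DecidableEq ι] {A : Matrix ι ι R} {x : ι → R}
    (hA : ∀ i j, 0 ≤ A i j) (hx : ∀ j, 0 ≤ x j) (m : ℕ)
    (i : ι) : 0 ≤ (A ^ m *ᵥ x) i := by
  induction m generalizing i with
  | zero => simpa using hx i
  | succ m ih => rw [pow_succ', ← mulVec_mulVec]; exact mulVec_nonneg hA ih i

end Nonneg

section Perron

variable {ι : Type*} [Fintype ι] [DecidableEq ι] {C : Matrix ι ι ℝ}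

lemma exists_pos_mulVec_lt_self (hC : ∀ i j, 0 ≤ C i j) {m : ℕ}
    (hm : ∀ i, (C ^ m *ᵥ 1) i < 1) : ∃ v : ι → ℝ, (∀ i, 0 < v i) ∧ ∀ i, (C *ᵥ v) i < v i := by
  set v := (∑ j ∈ range m, C ^ j) *ᵥ 1
  have hCv : C *ᵥ v = v + (C ^ m *ᵥ 1 - 1) := by
    have h : C * ∑ j ∈ range m, C ^ j =
        (C - 1) * ∑ j ∈ range m, C ^ j + ∑ j ∈ range m, C ^ j := by
      rw [sub_mul, one_mul, sub_add_cancel]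
    rw [mulVec_mulVec, h, mul_geom_sum, add_mulVec, sub_mulVec, one_mulVec, add_comm]
  have hv_lt : ∀ i, (C *ᵥ v) i < v i := fun i => by
    simpa [hCv] using hm i
  have hv_nonneg : ∀ i, 0 ≤ v i := fun i => by
    simp only [v, Matrix.sum_mulVec, Finset.sum_apply]
    exact Finset.sum_nonneg fun j _ => pow_mulVec_nonneg hC (fun _ => zero_le_one) j i
  exact ⟨v, fun i => (mulVec_nonneg hC hv_nonneg i).trans_lt (hv_lt i), hv_lt⟩

lemma exists_lt_one_mulVec_le_smul (hC : ∀ i j, 0 ≤ C i j) {m : ℕ}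
    (hm : ∀ i, (C ^ m *ᵥ 1) i < 1) :
    ∃ (v : ι → ℝ) (β : ℝ), (∀ i, 0 < v i) ∧ β < 1 ∧ ∀ i, (C *ᵥ v) i ≤ β * v i := by
  obtain ⟨v, hv, hCv⟩ := exists_pos_mulVec_lt_self hC hm
  obtain ⟨ε, hε, hεv⟩ := exists_pos_forall_le fun i => sub_pos.2 ((div_lt_one (hv i)).2 (hCv i))
  refine ⟨v, 1 - ε, hv, by linarith, fun i => ?_⟩
  have := hεv i
  rw [le_sub_iff_add_le, ← le_sub_iff_add_le', div_le_iff₀ (hv i)] at this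
  linarith

end Perron

section Spectrum

variable {n : ℕ} (C : Matrix (Fin n) (Fin n) ℝ)

attribute [local instance] Matrix.linftyOpNormedRing Matrix.linftyOpNormedAlgebra

lemma norm_le_specRad {z : ℂ} (hz : z ∈ spectrum ℂ (C.map (algebraMap ℝ ℂ))) :
    ‖z‖ ≤ specRad C :=
  le_csSup ((spectrum.isCompact _).image continuous_norm).bddAbove ⟨z, hz, rfl⟩

lemma isUnit_det_one_sub_of_specRad_lt_one (hρ : specRad C < 1) : IsUnit (1 - C).det := by
  have h1 : (1 : ℂ) ∉ spectrum ℂ (C.map (algebraMap ℝ ℂ)) := fun h =>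
    (norm_le_specRad C h).not_gt (by simpa using hρ)
  rw [spectrum.mem_iff, not_not, Algebra.algebraMap_eq_smul_one, one_smul,
    Matrix.isUnit_iff_isUnit_det] at h1
  have h2 : (1 - C.map (algebraMap ℝ ℂ)) = (algebraMap ℝ ℂ).mapMatrix (1 - C) := by
    simp [map_sub]
  rw [h2, ← RingHom.map_det, isUnit_map_iff] at h1
  exact h1

lemma spectralRadius_le_specRad :
    spectralRadius ℂ (C.map (algebraMap ℝ ℂ)) ≤ ENNReal.ofReal (specRad C) :=
  iSup₂_le fun z hz => by
    rw [← ENNReal.ofReal_coe_nnreal, coe_nnnorm]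
    exact ENNReal.ofReal_le_ofReal (norm_le_specRad C hz)

lemma exists_pow_mulVec_one_lt_one_of_specRad_lt_one (hρ : specRad C < 1) :
    ∃ m : ℕ, ∀ i, (C ^ m *ᵥ 1) i < 1 := by
  set M := C.map (algebraMap ℝ ℂ)
  have hM : spectralRadius ℂ M < 1 :=
    (spectralRadius_le_specRad C).trans_lt (ENNReal.ofReal_lt_one.2 hρ)
  obtain ⟨m, hm, hm0⟩ :=
    (((spectrum.pow_nnnorm_pow_one_div_tendsto_nhds_spectralRadius M).eventually_lt_const
      hM).and (Filter.eventually_gt_atTop 0)).exists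
  have hMm : ‖M ^ m‖ < 1 := by
    by_contra! h
    exact hm.not_ge (ENNReal.one_le_rpow (by exact_mod_cast h) (by positivity))
  refine ⟨m, fun i => ?_⟩
  have hcast : ((C ^ m *ᵥ 1) i : ℂ) = (M ^ m *ᵥ 1) i := by
    rw [← Complex.coe_algebraMap, RingHom.map_mulVec, ← RingHom.mapMatrix_apply, map_pow,
      show ⇑(algebraMap ℝ ℂ) ∘ (1 : Fin n → ℝ) = 1 by ext; simp]
    rfl
  calc (C ^ m *ᵥ 1) i ≤ ‖((C ^ m *ᵥ 1) i : ℂ)‖ := by simpa using le_abs_self _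
    _ ≤ ‖M ^ m *ᵥ 1‖ := hcast ▸ norm_le_pi_norm _ i
    _ ≤ ‖M ^ m‖ * ‖(1 : Fin n → ℂ)‖ := linfty_opNorm_mulVec _ _
    _ ≤ ‖M ^ m‖ := mul_le_of_le_one_right (norm_nonneg _)
          ((pi_norm_le_iff_of_nonneg zero_le_one).2 fun _ => by simp)
    _ < 1 := hMm

end Spectrum

section LogNorm

variable {E : Type*} [NormedAddCommGroup E] [NormedSpace ℝ E]

lemma frequently_slope_norm_lt {q : ℝ → E} {y : E} {x c r : ℝ}
    (hq : HasDerivWithinAt q y (Set.Ici x) x)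
    (hy : ∀ᶠ δ in 𝓝[>] 0, ‖q x + δ • y‖ ≤ (1 - c * δ) * ‖q x‖) (hr : -c * ‖q x‖ < r) :
    ∃ᶠ z in 𝓝[>] x, (z - x)⁻¹ * (‖q z‖ - ‖q x‖) < r := by
  set ε := (r + c * ‖q x‖) / 2
  have hε : 0 < ε := by simp only [ε]; linarith
  have hshift : Tendsto (fun z => z - x) (𝓝[>] x) (𝓝[>] 0) := by
    refine tendsto_nhdsWithin_iff.2 ⟨tendsto_nhdsWithin_of_tendsto_nhds ?_,
      eventually_nhdsWithin_of_forall fun z hz => Set.mem_Ioi.2 (sub_pos.2 hz)⟩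
    simpa using (continuous_sub_right x).tendsto x
  have hrem : ∀ᶠ z in 𝓝[>] x, ‖q z - q x - (z - x) • y‖ ≤ ε * ‖z - x‖ :=
    (hq.isLittleO.def hε).filter_mono (nhdsWithin_mono _ Set.Ioi_subset_Ici_self)
  refine ((hshift.eventually hy).and (hrem.and self_mem_nhdsWithin)).mono ?_ |>.frequently
  rintro z ⟨hlin, hrem, hxz : x < z⟩
  have hδ : 0 < z - x := sub_pos.2 hxz
  have hnorm : ‖q z‖ ≤ (1 - c * (z - x)) * ‖q x‖ + ε * (z - x) := by
    calc ‖q z‖ ≤ ‖q x + (z - x) • y‖ + ‖q z - q x - (z - x) • y‖ := by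
          simpa using norm_add_le (q x + (z - x) • y) (q z - q x - (z - x) • y)
      _ ≤ _ := by rw [Real.norm_of_nonneg hδ.le] at hrem; linarith
  have hslope : -c * ‖q x‖ + ε < r := by simp only [ε]; linarith
  rw [inv_mul_lt_iff₀ hδ]
  nlinarith [mul_lt_mul_of_pos_left hslope hδ]

theorem norm_le_mul_exp_of_norm_add_smul_le {F : E → E} {c : ℝ}
    (hF : ∀ x, ∀ᶠ δ in 𝓝[>] 0, ‖x + δ • F x‖ ≤ (1 - c * δ) * ‖x‖) {q : ℝ → E}
    (hq : ∀ t, 0 ≤ t → HasDerivAt q (F (q t)) t) {t : ℝ} (ht : 0 ≤ t) :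
    ‖q t‖ ≤ ‖q 0‖ * Real.exp (-c * t) := by
  have h := le_gronwallBound_of_liminf_deriv_right_le
    (f' := fun s => -c * ‖q s‖) (K := -c) (ε := 0)
    (fun s hs => (hq s hs.1).continuousAt.norm.continuousWithinAt)
    (fun s hs r hr => frequently_slope_norm_lt (hq s hs.1).hasDerivWithinAt (hF _) hr)
    le_rfl (fun s _ => by simp) t ⟨ht, le_rfl⟩
  simpa [gronwallBound_ε0] using h

theorem tendsto_zero_of_norm_add_smul_le {F : E → E} {c : ℝ} (hc : 0 < c)
    (hF : ∀ x, ∀ᶠ δ in 𝓝[>] 0, ‖x + δ • F x‖ ≤ (1 - c * δ) * ‖x‖) {q : ℝ → E}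
    (hq : ∀ t, 0 ≤ t → HasDerivAt q (F (q t)) t) : Tendsto q atTop (𝓝 0) := by
  refine squeeze_zero_norm' (eventually_ge_atTop 0 |>.mono fun t ht =>
    norm_le_mul_exp_of_norm_add_smul_le hF hq ht) ?_
  simpa using (Real.tendsto_exp_atBot.comp
    (tendsto_id.const_mul_atTop_of_neg (neg_neg_of_pos hc) : _)).const_mul ‖q 0‖

end LogNorm

section Relaxation

variable {ι : Type*} [Fintype ι] {k : ι → ℝ}

lemma eventually_norm_add_smul_relax_le (hk : ∀ i, 0 < k i) {L : (ι → ℝ) → ι → ℝ} {β c : ℝ}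
    (hL : ∀ x i, |L x i| ≤ β * ‖x‖) (hc : ∀ i, c ≤ k i * (1 - β)) (x : ι → ℝ) :
    ∀ᶠ δ in 𝓝[>] 0, ‖x + δ • fun i => k i * (-x i + L x i)‖ ≤ (1 - c * δ) * ‖x‖ := by
  have hsmall : ∀ a : ℝ, ∀ᶠ δ in 𝓝[>] (0 : ℝ), δ * a ≤ 1 := fun a =>
    (((continuous_mul_const a).tendsto' 0 0 (zero_mul a)).eventually
      (eventually_le_nhds one_pos)).filter_mono nhdsWithin_le_nhds
  filter_upwards [self_mem_nhdsWithin, hsmall c, eventually_all.2 fun i => hsmall (k i)]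
    with δ (hδ : 0 < δ) hδc hδk
  refine (pi_norm_le_iff_of_nonneg (mul_nonneg (by linarith) (norm_nonneg x))).2 fun i => ?_
  have hxi : |x i| ≤ ‖x‖ := by simpa using norm_le_pi_norm x i
  have hδki : 0 ≤ δ * k i := mul_nonneg hδ.le (hk i).le
  calc ‖(x + δ • fun i => k i * (-x i + L x i)) i‖
      = |(1 - δ * k i) * x i + δ * k i * L x i| := by
        simp only [Pi.add_apply, Pi.smul_apply, smul_eq_mul, Real.norm_eq_abs]; ring_nf
    _ ≤ (1 - δ * k i) * |x i| + δ * k i * |L x i| := by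
        refine (abs_add_le _ _).trans_eq ?_
        rw [abs_mul, abs_mul, abs_of_nonneg (sub_nonneg.2 (hδk i)), abs_of_nonneg hδki]
    _ ≤ (1 - δ * k i) * ‖x‖ + δ * k i * (β * ‖x‖) := by
        gcongr
        · linarith [hδk i]
        · exact hL x i
    _ = (1 - δ * (k i * (1 - β))) * ‖x‖ := by ring
    _ ≤ (1 - c * δ) * ‖x‖ := by
        refine mul_le_mul_of_nonneg_right ?_ (norm_nonneg x)
        linarith [mul_le_mul_of_nonneg_left (hc i) hδ.le]

theorem tendsto_zero_of_hasDerivAt_relax (hk : ∀ i, 0 < k i) {L : (ι → ℝ) → ι → ℝ} {β : ℝ}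
    (hβ : β < 1) (hL : ∀ x i, |L x i| ≤ β * ‖x‖) {q : ℝ → ι → ℝ}
    (hq : ∀ t, 0 ≤ t → HasDerivAt q (fun i => k i * (-q t i + L (q t) i)) t) :
    Tendsto q atTop (𝓝 0) := by
  obtain ⟨c, hc, hck⟩ := exists_pos_forall_le fun i => mul_pos (hk i) (sub_pos.2 hβ)
  exact tendsto_zero_of_norm_add_smul_le hc (eventually_norm_add_smul_relax_le hk hL hck) hq

end Relaxation

section WeightedSupNorm

variable {ι : Type*} [Fintype ι] {C : Matrix ι ι ℝ} {v : ι → ℝ}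

lemma abs_mulVec_mul_le (hC : ∀ i j, 0 ≤ C i j) (hv : ∀ j, 0 ≤ v j) (x : ι → ℝ) (i : ι) :
    |(C *ᵥ (v * x)) i| ≤ (C *ᵥ v) i * ‖x‖ :=
  calc |(C *ᵥ (v * x)) i| ≤ ∑ j, |C i j * (v j * x j)| := abs_sum_le_sum_abs _ _
    _ ≤ ∑ j, C i j * v j * ‖x‖ := sum_le_sum fun j _ => by
        rw [abs_mul, abs_mul, abs_of_nonneg (hC i j), abs_of_nonneg (hv j), ← mul_assoc]
        exact mul_le_mul_of_nonneg_left (by simpa using norm_le_pi_norm x j)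
          (mul_nonneg (hC i j) (hv j))
    _ = (C *ᵥ v) i * ‖x‖ := by simp only [mulVec, dotProduct, sum_mul]

theorem tendsto_zero_of_hasDerivAt_mulVec (hC : ∀ i j, 0 ≤ C i j) (hv : ∀ i, 0 < v i)
    {β : ℝ} (hβ : β < 1) (hCv : ∀ i, (C *ᵥ v) i ≤ β * v i) {k : ι → ℝ} (hk : ∀ i, 0 < k i)
    {e : ℝ → ι → ℝ}
    (he : ∀ t, 0 ≤ t → HasDerivAt e (fun i => k i * (-e t i + (C *ᵥ e t) i)) t) :
    Tendsto e atTop (𝓝 0) := by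
  have hve : ∀ x, v * (x / v) = x := fun x => by ext i; simp [mul_div_cancel₀ _ (hv i).ne']
  have hL : ∀ x i, |(C *ᵥ (v * x)) i / v i| ≤ β * ‖x‖ := fun x i => by
    rw [abs_div, abs_of_pos (hv i), div_le_iff₀ (hv i)]
    calc _ ≤ (C *ᵥ v) i * ‖x‖ := abs_mulVec_mul_le hC (fun j => (hv j).le) x i
      _ ≤ β * v i * ‖x‖ := mul_le_mul_of_nonneg_right (hCv i) (norm_nonneg x)
      _ = β * ‖x‖ * v i := by ring
  have hq : ∀ t, 0 ≤ t → HasDerivAt (fun s => e s / v)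
      (fun i => k i * (-(e t / v) i + (C *ᵥ (v * (e t / v))) i / v i)) t := fun t ht => by
    refine hasDerivAt_pi.2 fun i => ?_
    refine ((hasDerivAt_pi.1 (he t ht) i).div_const (v i)).congr_deriv ?_
    rw [hve, Pi.div_apply]
    ring
  simpa [hve] using (tendsto_zero_of_hasDerivAt_relax hk hβ hL hq).const_mul v

end WeightedSupNorm

section FoschiniMiljanic

variable {ι : Type*} [Fintype ι] [DecidableEq ι]

lemma mulVec_nonsing_inv_one_sub_add {R : Type*} [CommRing R] {C : Matrix ι ι R}
    (h : IsUnit (1 - C).det) (η : ι → R) :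
    C *ᵥ ((1 - C)⁻¹ *ᵥ η) + η = (1 - C)⁻¹ *ᵥ η := by
  have h1 : (1 - C) *ᵥ ((1 - C)⁻¹ *ᵥ η) = η := by
    rw [mulVec_mulVec, mul_nonsing_inv _ h, one_mulVec]
  rw [sub_mulVec, one_mulVec] at h1
  linear_combination -h1

lemma interference_eq_mulVec_add {g : ι → ι → ℝ} {ν γ η : ι → ℝ} {C : Matrix ι ι ℝ}
    (hC : ∀ i j, C i j = if i = j then 0 else γ i * g j i / g i i)
    (hη : ∀ i, η i = γ i * ν i / g i i) (x : ι → ℝ) (i : ι) :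
    γ i * ((∑ j ∈ univ.erase i, g j i / g i i * x j) + ν i / g i i) = (C *ᵥ x) i + η i := by
  rw [hη, mul_add, mulVec, dotProduct, ← Finset.sum_erase univ (a := i) (by simp [hC]), mul_sum]
  congr 1
  · refine sum_congr rfl fun j hj => ?_
    rw [hC, if_neg (ne_of_mem_erase hj).symm]
    ring
  · ring

end FoschiniMiljanic

theorem foschini_miljanic_stability_general
    (n : ℕ)
    (g : Fin n → Fin n → ℝ) (ν γ : Fin n → ℝ)
    (hg : ∀ j i, 0 < g j i) (hγ : ∀ i, 0 < γ i)
    (C : Matrix (Fin n) (Fin n) ℝ)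
    (hC : ∀ i j, C i j = if i = j then 0 else γ i * g j i / g i i)
    (η : Fin n → ℝ) (hη : ∀ i, η i = γ i * ν i / g i i)
    (hρ : specRad C < 1)
    (k : Fin n → ℝ) (hk : ∀ i, 0 < k i)
    (p : ℝ → Fin n → ℝ)
    (hp : ∀ t : ℝ, 0 ≤ t → HasDerivAt p
      (fun i => k i * (-(p t i) +
        γ i * ((∑ j ∈ univ.erase i, g j i / g i i * p t j) + ν i / g i i))) t) :
    Filter.Tendsto p Filter.atTop (nhds ((1 - C)⁻¹ *ᵥ η)) := by
  have hC_nonneg : ∀ i j, 0 ≤ C i j := fun i j => by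
    rw [hC]
    split_ifs
    · exact le_rfl
    · exact div_nonneg (mul_pos (hγ i) (hg j i)).le (hg i i).le
  obtain ⟨m, hm⟩ := exists_pow_mulVec_one_lt_one_of_specRad_lt_one C hρ
  obtain ⟨v, β, hv, hβ, hCv⟩ := exists_lt_one_mulVec_le_smul hC_nonneg hm
  set pstar := (1 - C)⁻¹ *ᵥ η
  have hfix : ∀ i, (C *ᵥ pstar) i + η i = pstar i :=
    congrFun (mulVec_nonsing_inv_one_sub_add (isUnit_det_one_sub_of_specRad_lt_one C hρ) η)
  have he : ∀ t, 0 ≤ t → HasDerivAt (fun s => p s - pstar)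
      (fun i => k i * (-(p t - pstar) i + (C *ᵥ (p t - pstar)) i)) t := fun t ht => by
    refine ((hp t ht).sub_const pstar).congr_deriv (funext fun i => ?_)
    rw [interference_eq_mulVec_add hC hη, mulVec_sub, Pi.sub_apply, Pi.sub_apply]
    linear_combination k i * hfix i
  simpa using (tendsto_zero_of_hasDerivAt_mulVec hC_nonneg hv hβ hCv hk he).add_const pstar

/-- Stability of the Foschini–Miljanic algorithm: with positive gains
`g j i`, noises `ν i`, SINR targets `γ i`, `C i j = γ i * g j i / g i i` off the
diagonal, `η i = γ i * ν i / g i i`, spectral radius of `C` less than `1`, and arbitrary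
positive proportionality constants `k i`, every differentiable trajectory `p : ℝ → ℝⁿ`
of the Foschini–Miljanic dynamics
`pᵢ'(t) = kᵢ (-pᵢ(t) + γᵢ (∑_{j ≠ i} (g j i / g i i) pⱼ(t) + νᵢ / g i i))` for `t ≥ 0`,
with any initial state `p 0`, converges as `t → ∞` to the unique equilibrium
`p* = (I - C)⁻¹ η`. -/
theorem foschini_miljanic_stability
    (n : ℕ) (hn : 1 ≤ n)
    (g : Fin n → Fin n → ℝ) (ν γ : Fin n → ℝ)
    (hg : ∀ j i, 0 < g j i) (hν : ∀ i, 0 < ν i) (hγ : ∀ i, 0 < γ i)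
    (C : Matrix (Fin n) (Fin n) ℝ)
    (hC : ∀ i j, C i j = if i = j then 0 else γ i * g j i / g i i)
    (η : Fin n → ℝ) (hη : ∀ i, η i = γ i * ν i / g i i)
    (hρ : specRad C < 1)
    (k : Fin n → ℝ) (hk : ∀ i, 0 < k i)
    (p : ℝ → Fin n → ℝ)
    (hp : ∀ t : ℝ, 0 ≤ t → HasDerivAt p
      (fun i => k i * (-(p t i) +
        γ i * ((∑ j ∈ univ.erase i, g j i / g i i * p t j) + ν i / g i i))) t) :
    Filter.Tendsto p Filter.atTop (nhds ((1 - C)⁻¹ *ᵥ η)) :=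
  foschini_miljanic_stability_general n g ν γ hg hγ C hC η hη hρ k hk p hp
end
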